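/- (Note after Theorem 2: file-size optimality) Let r, α, β, n_L, t be positive integers with n_L ≥ r and α ≥ (r−1)β, let (a_j) be the MBR rank accumulation profile with parameters (r, α, β, n_L), extended periodically with period n_L, and set K_L = αr − C(r,2)β and n = t·n_L. Suppose K = v_1·K_L + v_0 with integers v_1 ≥ 0 and 1 ≤ v_0 ≤ K_L, where v_0 = να − C(ν,2)β for some integer 1 ≤ ν ≤ r, and K ≤ t·K_L. Then P(P^{inv}(K)) = K; equivalently, setting d_min := n − P^{inv}(K) + 1 (the minimum distance achieved by Construction 1), one has K = P(n − d_min + 1), i.e., the constructed code achieves the file-size bound K ≤ P(n − d_min + 1) with equality. -/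

import Mathlib

/-!
The MBR profile loses `β` per step within a period, so `P(m) = mα - C(m,2)β` for `m ≤ r`, and
`P(nL) = K_L` since the profile vanishes on `[r, nL)`. By periodicity
`P(v₁·nL + ν) = v₁·K_L + v₀ = K`, so `K` is a value of the monotone function `P`; the least
`s` with `P(s) ≥ K` then has `P(s) = K`. Finally `1 ≤ P^{inv}(K) ≤ t·nL` because
`P(0) = 0 < K ≤ t·K_L = P(t·nL)`, so the truncated subtractions in `n - d_min + 1` cancel.
-/

/-- Partial sums `P(s) = a_1 + … + a_s` of a (0-indexed) sequence `a : ℕ → ℕ`. -/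
def Pfun (a : ℕ → ℕ) (s : ℕ) : ℕ := ∑ i ∈ Finset.range s, a i

noncomputable def Pinv (a : ℕ → ℕ) (ν : ℕ) : ℕ := sInf {s : ℕ | ν ≤ Pfun a s}

section PartialSums

variable (a : ℕ → ℕ)

@[simp]
lemma Pfun_zero : Pfun a 0 = 0 := rfl

lemma Pfun_succ (s : ℕ) : Pfun a (s + 1) = Pfun a s + a s :=
  Finset.sum_range_succ a s

lemma Pfun_add (s x : ℕ) : Pfun a (s + x) = Pfun a s + ∑ i ∈ Finset.range x, a (s + i) :=
  Finset.sum_range_add a s x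

lemma Pfun_mono : Monotone (Pfun a) := fun _ _ h =>
  Finset.sum_le_sum_of_subset (Finset.range_subset_range.mpr h)

variable {a}

lemma Pfun_add_of_periodic {n : ℕ} (h : Function.Periodic a n) (x : ℕ) :
    Pfun a (n + x) = Pfun a n + Pfun a x := by
  rw [Pfun_add]
  congr 1
  exact Finset.sum_congr rfl fun i _ => by rw [add_comm, h]

lemma Pfun_mul_of_periodic {n : ℕ} (h : Function.Periodic a n) (j : ℕ) :
    Pfun a (j * n) = j * Pfun a n := by
  induction j with
  | zero => simp
  | succ j ih => rw [add_one_mul, add_comm, Pfun_add_of_periodic h, ih, add_one_mul, add_comm]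

lemma Pfun_mul_add_of_periodic {n : ℕ} (h : Function.Periodic a n) (j m : ℕ) :
    Pfun a (j * n + m) = j * Pfun a n + Pfun a m := by
  rw [Pfun_add_of_periodic (by simpa using h.nat_mul j), Pfun_mul_of_periodic h]

lemma Pinv_le_of_le_Pfun {K s : ℕ} (h : K ≤ Pfun a s) : Pinv a K ≤ s :=
  Nat.sInf_le h

lemma Pfun_Pinv_of_Pfun_eq {K s : ℕ} (h : Pfun a s = K) : Pfun a (Pinv a K) = K :=
  le_antisymm ((Pfun_mono a (Pinv_le_of_le_Pfun h.ge)).trans_eq h)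
    (Nat.sInf_mem (s := {s | K ≤ Pfun a s}) ⟨s, h.ge⟩)

end PartialSums

section MBR

def mbrProfile (r α β nL : ℕ) (i : ℕ) : ℕ :=
  if i % nL < r then α - (i % nL) * β else 0

variable {r α β nL : ℕ}

lemma mbrProfile_periodic : Function.Periodic (mbrProfile r α β nL) nL := fun i => by
  simp only [mbrProfile, Nat.add_mod_right]

variable (hnLr : r ≤ nL) (hαβ : (r - 1) * β ≤ α)
include hnLr hαβ

lemma Pfun_mbrProfile_add_choose_mul {m : ℕ} (hm : m ≤ r) :
    Pfun (mbrProfile r α β nL) m + m.choose 2 * β = m * α := by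
  induction m with
  | zero => simp
  | succ m ih =>
    have hmβ : m * β ≤ α := (Nat.mul_le_mul_right β (by omega)).trans hαβ
    have ham : mbrProfile r α β nL m = α - m * β := by
      rw [mbrProfile, Nat.mod_eq_of_lt (by omega), if_pos (by omega)]
    have hchoose : (m + 1).choose 2 = m.choose 2 + m := by
      rw [Nat.choose_succ_succ', Nat.choose_one_right, add_comm]
    rw [Pfun_succ, ham, hchoose, add_mul, add_one_mul]
    have := ih (by omega)
    omega

lemma Pfun_mbrProfile_of_le {m : ℕ} (hm : m ≤ r) :
    Pfun (mbrProfile r α β nL) m = m * α - m.choose 2 * β := by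
  have := Pfun_mbrProfile_add_choose_mul hnLr hαβ hm
  omega

lemma Pfun_mbrProfile_period :
    Pfun (mbrProfile r α β nL) nL = α * r - r.choose 2 * β := by
  obtain ⟨k, rfl⟩ := Nat.exists_eq_add_of_le hnLr
  have hzero : ∀ i ∈ Finset.range k, mbrProfile r α β (r + k) (r + i) = 0 := fun i hi => by
    rw [mbrProfile, Nat.mod_eq_of_lt (by simp at hi; omega), if_neg (by omega)]
  rw [Pfun_add, Finset.sum_eq_zero hzero, add_zero, Pfun_mbrProfile_of_le hnLr hαβ le_rfl,
    mul_comm]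

end MBR

theorem stmt_10_general (r α β nL t : ℕ)
    (hnLr : r ≤ nL) (hαβ : (r - 1) * β ≤ α)
    (a : ℕ → ℕ)
    (ha : ∀ i, a i = if i % nL < r then α - (i % nL) * β else 0)
    (K v1 v0 ν : ℕ)
    (hv0l : 1 ≤ v0)
    (hνr : ν ≤ r)
    (hv0 : v0 = ν * α - Nat.choose ν 2 * β)
    (hKdef : K = v1 * (α * r - Nat.choose r 2 * β) + v0)
    (hKle : K ≤ t * (α * r - Nat.choose r 2 * β)) :
    Pfun a (Pinv a K) = K
    ∧ K = Pfun a (t * nL - (t * nL - Pinv a K + 1) + 1) := by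
  obtain rfl : a = mbrProfile r α β nL := funext ha
  have hKL := Pfun_mbrProfile_period hnLr hαβ
  have hK : Pfun (mbrProfile r α β nL) (v1 * nL + ν) = K := by
    rw [Pfun_mul_add_of_periodic mbrProfile_periodic, hKL,
      Pfun_mbrProfile_of_le hnLr hαβ hνr, hKdef, hv0]
  have hPinv := Pfun_Pinv_of_Pfun_eq hK
  have hPinv_pos : Pinv (mbrProfile r α β nL) K ≠ 0 := fun h => by
    rw [h, Pfun_zero] at hPinv
    omega
  have hPinv_le : Pinv (mbrProfile r α β nL) K ≤ t * nL :=
    Pinv_le_of_le_Pfun (by rwa [Pfun_mul_of_periodic mbrProfile_periodic, hKL])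
  refine ⟨hPinv, ?_⟩
  rw [show t * nL - (t * nL - Pinv (mbrProfile r α β nL) K + 1) + 1
      = Pinv (mbrProfile r α β nL) K by omega, hPinv]

/-- **Note after Theorem 2: file-size optimality.**  Let `r, α, β, nL, t` be
positive integers with `nL ≥ r` and `α ≥ (r-1)β`, let `a` be the MBR rank accumulation
profile with parameters `(r, α, β, nL)` extended periodically with period `nL` (0-indexed:
`a i = α - (i % nL)·β` if `i % nL < r`, else `0`), and set `K_L = αr - C(r,2)β` and
`n = t·nL`.  Suppose `K = v_1·K_L + v_0` with integers `v_1 ≥ 0`, `1 ≤ v_0 ≤ K_L`, where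
`v_0 = να - C(ν,2)β` for some integer `1 ≤ ν ≤ r`, and `K ≤ t·K_L`.  Then
`P(P^{inv}(K)) = K`; equivalently, setting `d_min := n - P^{inv}(K) + 1` (the minimum
distance achieved by Construction 1), one has `K = P(n - d_min + 1)`, i.e. the constructed
code achieves the file-size bound `K ≤ P(n - d_min + 1)` with equality. -/
theorem stmt_10 (r α β nL t : ℕ) (hr : 0 < r) (hα : 0 < α) (hβ : 0 < β) (ht : 0 < t)
    (hnLr : r ≤ nL) (hαβ : (r - 1) * β ≤ α)
    (a : ℕ → ℕ)
    (ha : ∀ i, a i = if i % nL < r then α - (i % nL) * β else 0)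
    (K v1 v0 ν : ℕ)
    (hv0l : 1 ≤ v0) (hv0u : v0 ≤ α * r - Nat.choose r 2 * β)
    (hν1 : 1 ≤ ν) (hνr : ν ≤ r)
    (hv0 : v0 = ν * α - Nat.choose ν 2 * β)
    (hKdef : K = v1 * (α * r - Nat.choose r 2 * β) + v0)
    (hKle : K ≤ t * (α * r - Nat.choose r 2 * β)) :
    Pfun a (Pinv a K) = K
    ∧ K = Pfun a (t * nL - (t * nL - Pinv a K + 1) + 1) :=
  stmt_10_general r α β nL t hnLr hαβ a ha K v1 v0 ν hv0l hνr hv0 hKdef hKle
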